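/- Let G be a topological group equipped with its Borel σ-algebra, let μ be a nonzero finite tight Borel measure on G, and let Δ be a continuous right-invariant pseudometric on G with Δ(x,y) ≤ 2 for all x,y. Then the function Δ_μ defined by Δ_μ(y,z) := (∫ Δ(x·y, x·z) dμ(x)) / μ(G) is a continuous right-invariant pseudometric on G. -/

import Mathlib

/-!
The pseudometric axioms and right invariance hold pointwise in `x` for `Δ(x·y, x·z)` and pass
through the integral. For continuity, tightness puts all but `δ` of the mass on a compact `K`;
by joint continuity and compactness of `K`, `Δ(x·y, x·z)` moves by less than `δ` uniformly in
`x ∈ K` when `(y, z)` moves a little, while on the complement of `K` the integrand moves by at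
most `4`.
-/

def IsPseudometric {X : Type*} (d : X → X → ℝ) : Prop :=
  (∀ x, d x x = 0) ∧ (∀ x y, d x y = d y x) ∧ (∀ x y, 0 ≤ d x y) ∧
    (∀ x y z, d x z ≤ d x y + d y z)

def BLipb {X : Type*} (d : X → X → ℝ) : Set (X → ℝ) :=
  {f | (∀ x, f x ∈ Set.Icc (-1 : ℝ) 1) ∧ ∀ x y, |f x - f y| ≤ d x y}

def RightInvariant {G : Type*} [Group G] (d : G → G → ℝ) : Prop :=
  ∀ x y z : G, d (x * z) (y * z) = d x y

def LeftInvariant {G : Type*} [Group G] (d : G → G → ℝ) : Prop :=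
  ∀ x y z : G, d (z * x) (z * y) = d x y

def ContPseudometric {G : Type*} [TopologicalSpace G] (d : G → G → ℝ) : Prop :=
  Continuous fun p : G × G => d p.1 p.2

def IsSIN (G : Type*) [Group G] [TopologicalSpace G] : Prop :=
  ∀ U ∈ nhds (1 : G), ∃ (d : G → G → ℝ) (ε : ℝ), IsPseudometric d ∧
    ContPseudometric d ∧ LeftInvariant d ∧ RightInvariant d ∧ 0 < ε ∧
    {x : G | d x 1 < ε} ⊆ U

def IsTightMeas {G : Type*} [TopologicalSpace G] [MeasurableSpace G]
    (μ : MeasureTheory.Measure G) : Prop :=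
  ∀ ε : ℝ, 0 < ε → ∃ K : Set G, IsCompact K ∧ μ Kᶜ < ENNReal.ofReal ε

open MeasureTheory Filter Topology Set

namespace IsPseudometric

variable {X : Type*} {d : X → X → ℝ}

lemma comp (hd : IsPseudometric d) {Y : Type*} (g : Y → X) :
    IsPseudometric fun y z => d (g y) (g z) :=
  ⟨fun _ => hd.1 _, fun _ _ => hd.2.1 _ _, fun _ _ => hd.2.2.1 _ _, fun _ _ _ => hd.2.2.2 _ _ _⟩

lemma div_const (hd : IsPseudometric d) {c : ℝ} (hc : 0 ≤ c) :
    IsPseudometric fun x y => d x y / c := by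
  obtain ⟨hzero, hsymm, hnonneg, htri⟩ := hd
  refine ⟨fun x => by simp [hzero], fun x y => by simp only [hsymm x y],
    fun x y => div_nonneg (hnonneg x y) hc, fun x y z => ?_⟩
  rw [← add_div]
  exact div_le_div_of_nonneg_right (htri x y z) hc

lemma integral {Ω : Type*} [MeasurableSpace Ω] {μ : Measure Ω} {d : Ω → X → X → ℝ}
    (hd : ∀ ω, IsPseudometric (d ω)) (hint : ∀ x y, Integrable (fun ω => d ω x y) μ) :
    IsPseudometric fun x y => ∫ ω, d ω x y ∂μ := by
  refine ⟨fun x => by simp [(hd _).1], fun x y => by simp_rw [(hd _).2.1 x y],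
    fun x y => integral_nonneg fun ω => (hd ω).2.2.1 x y, fun x y z => ?_⟩
  rw [← integral_add (hint x y) (hint y z)]
  exact integral_mono (hint x z) ((hint x y).add (hint y z)) fun ω => (hd ω).2.2.2 x y z

end IsPseudometric

lemma norm_integral_le_of_norm_le_on {X E : Type*} [MeasurableSpace X] [NormedAddCommGroup E]
    [NormedSpace ℝ E] {μ : Measure X} [IsFiniteMeasure μ] {g : X → E} {K : Set X} {δ M : ℝ}
    (hδ : 0 ≤ δ) (hgK : ∀ x ∈ K, ‖g x‖ ≤ δ) (hg : ∀ x, ‖g x‖ ≤ M) :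
    ‖∫ x, g x ∂μ‖ ≤ δ * μ.real univ + M * μ.real Kᶜ := by
  -- `K` need not be measurable; its complement is replaced by a measurable hull of equal measure
  set t := toMeasurable μ Kᶜ
  have hbound : ∀ x, ‖g x‖ ≤ δ + t.indicator (fun _ => M) x := by
    intro x
    by_cases hx : x ∈ t
    · simpa [hx] using (hg x).trans (le_add_of_nonneg_left hδ)
    · have hxK : x ∈ K := by_contra fun h => hx (subset_toMeasurable μ _ h)
      simpa [hx] using hgK x hxK
  have hint : Integrable (t.indicator fun _ => M) μ :=
    (integrable_const M).indicator (measurableSet_toMeasurable _ _)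
  calc ‖∫ x, g x ∂μ‖ ≤ ∫ x, δ + t.indicator (fun _ => M) x ∂μ :=
        norm_integral_le_of_norm_le ((integrable_const δ).add hint) (ae_of_all _ hbound)
    _ = δ * μ.real univ + M * μ.real Kᶜ := by
        rw [integral_add (integrable_const δ) hint, integral_const,
          integral_indicator_const _ (measurableSet_toMeasurable _ _)]
        simp only [smul_eq_mul, measureReal_def, measure_toMeasurable, mul_comm]

lemma IsTightMeas.continuous_integral {X Y : Type*} [TopologicalSpace X] [MeasurableSpace X]
    [OpensMeasurableSpace X] [TopologicalSpace Y] {μ : Measure X} [IsFiniteMeasure μ]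
    (hμ : IsTightMeas μ) {f : X → Y → ℝ} (hf : Continuous (Function.uncurry f)) {C : ℝ}
    (hC : ∀ x y, ‖f x y‖ ≤ C) :
    Continuous fun y => ∫ x, f x y ∂μ := by
  replace hC : ∀ x y, ‖f x y‖ ≤ max C 0 := fun x y => (hC x y).trans (le_max_left _ _)
  set M := max C 0
  have hint : ∀ y, Integrable (f · y) μ := fun y =>
    .of_bound (hf.uncurry_right y).aestronglyMeasurable M (ae_of_all _ fun x => hC x y)
  refine continuous_iff_continuousAt.2 fun y₀ => Metric.tendsto_nhds.2 fun ε hε => ?_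
  set δ := ε / (μ.real univ + 2 * M + 1)
  have hδ : 0 < δ := by positivity
  obtain ⟨K, hK, hKc⟩ := hμ δ hδ
  have hKc' : μ.real Kᶜ < δ := ENNReal.toReal_lt_of_lt_ofReal hKc
  have hunif : ∀ᶠ y in 𝓝 y₀, ∀ x ∈ K, dist (f x y) (f x y₀) < δ :=
    hK.eventually_forall_of_forall_eventually fun x _ =>
      (((hf.comp continuous_swap).tendsto (y₀, x)).dist
        ((hf.comp (continuous_snd.prodMk continuous_const)).tendsto (y₀, x))).eventually
        (gt_mem_nhds (by simpa using hδ))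
  filter_upwards [hunif] with y hy
  rw [dist_eq_norm, ← integral_sub (hint y) (hint y₀)]
  calc ‖∫ x, f x y - f x y₀ ∂μ‖ ≤ δ * μ.real univ + 2 * M * μ.real Kᶜ :=
        norm_integral_le_of_norm_le_on hδ.le (fun x hx => (hy x hx).le)
          fun x => (norm_sub_le _ _).trans (by linarith [hC x y, hC x y₀])
    _ ≤ δ * (μ.real univ + 2 * M) := by nlinarith [le_max_right C 0]
    _ < ε := by
        rw [div_mul_eq_mul_div, div_lt_iff₀ (by positivity)]
        nlinarith

theorem averaged_pseudometric_general (G : Type*) [Group G] [TopologicalSpace G]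
    [IsTopologicalGroup G] [MeasurableSpace G] [BorelSpace G]
    (μ : MeasureTheory.Measure G) [MeasureTheory.IsFiniteMeasure μ]
    (hμ : IsTightMeas μ)
    (Δ : G → G → ℝ) (hpm : IsPseudometric Δ) (hcont : ContPseudometric Δ)
    (hri : RightInvariant Δ) (hbd : ∀ x y : G, Δ x y ≤ 2) :
    IsPseudometric (fun y z : G => (∫ x, Δ (x * y) (x * z) ∂μ) / (μ Set.univ).toReal) ∧
    ContPseudometric (fun y z : G => (∫ x, Δ (x * y) (x * z) ∂μ) / (μ Set.univ).toReal) ∧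
    RightInvariant (fun y z : G => (∫ x, Δ (x * y) (x * z) ∂μ) / (μ Set.univ).toReal) := by
  have hbound : ∀ x y, ‖Δ x y‖ ≤ 2 := fun x y => by
    rw [Real.norm_of_nonneg (hpm.2.2.1 x y)]
    exact hbd x y
  have hjoint : Continuous (Function.uncurry fun x (p : G × G) => Δ (x * p.1) (x * p.2)) :=
    hcont.comp (by fun_prop : Continuous fun q : G × (G × G) => (q.1 * q.2.1, q.1 * q.2.2))
  have hint : ∀ y z, Integrable (fun x => Δ (x * y) (x * z)) μ := fun y z =>
    .of_bound (hjoint.uncurry_right (y, z)).aestronglyMeasurable 2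
      (ae_of_all _ fun _ => hbound _ _)
  refine ⟨(IsPseudometric.integral (fun x => hpm.comp (x * ·)) hint).div_const
    ENNReal.toReal_nonneg, ?_, fun y z w => ?_⟩
  · exact (hμ.continuous_integral hjoint fun _ _ => hbound _ _).div_const _
  · simp only [← mul_assoc, hri _ _ w]

/-- for a nonzero finite tight Borel measure μ and a continuous
right-invariant pseudometric Δ ≤ 2, the averaged pseudometric
Δ_μ(y,z) = (∫ Δ(x·y, x·z) dμ(x)) / μ(G) is a continuous right-invariant pseudometric. -/
theorem averaged_pseudometric (G : Type*) [Group G] [TopologicalSpace G]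
    [IsTopologicalGroup G] [T2Space G] [MeasurableSpace G] [BorelSpace G]
    (μ : MeasureTheory.Measure G) [MeasureTheory.IsFiniteMeasure μ] (hμ0 : μ ≠ 0)
    (hμ : IsTightMeas μ)
    (Δ : G → G → ℝ) (hpm : IsPseudometric Δ) (hcont : ContPseudometric Δ)
    (hri : RightInvariant Δ) (hbd : ∀ x y : G, Δ x y ≤ 2) :
    IsPseudometric (fun y z : G => (∫ x, Δ (x * y) (x * z) ∂μ) / (μ Set.univ).toReal) ∧
    ContPseudometric (fun y z : G => (∫ x, Δ (x * y) (x * z) ∂μ) / (μ Set.univ).toReal) ∧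
    RightInvariant (fun y z : G => (∫ x, Δ (x * y) (x * z) ∂μ) / (μ Set.univ).toReal) :=
  averaged_pseudometric_general G μ hμ Δ hpm hcont hri hbd
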